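/- For all κ ∉ −ℕ, m ≥ n, and each index i with 2 < i ≤ N: D_i(x_i ω_{mn}) = (1 + (N−3)κ) ω_{mn} + κ((1,i) + (2,i)) ω_{mn}, and consequently D_i(x_i ω_{mn}) − κ Σ_{j<i} (i,j)ω_{mn} = ((N−i)κ + 1) ω_{mn}; moreover (i,j)ω_{mn} = ω_{mn} for all 2 < i < j ≤ N. -/

import Mathlib

/-!
For `i ∉ {1, 2}` the Dunkl operator `Dᵢ` kills every `p_{mn}`. Write `p_{mn} = P_m(x₁) P_n(x₂)`,
where `P_m(y)` is the coefficient of `s ^ m` in `(1 - s y)⁻¹ ∏ⱼ (1 - s xⱼ) ^ (-κ)`. In `Dᵢ p_{mn}`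
only the transpositions `(i,1)` and `(i,2)` contribute a difference quotient, and the identity
`(xᵢ - y) ∂ᵢ P_m(y) = κ (P_m(xᵢ) - P_m(y))`, which comes from `∂ᵢ G = κ s G / (1 - s xᵢ)` for
`G = ∏ⱼ (1 - s xⱼ) ^ (-κ)`, makes them cancel `∂ᵢ p_{mn}`. Since `ω_{mn}` is a linear
combination of the `p_{ab}`, also `Dᵢ ω_{mn} = 0`, and `ω_{mn}` is fixed by every `(i,j)` with
`i, j ∉ {1, 2}`. The product rule `Dᵢ (xᵢ f) = f + xᵢ Dᵢ f + κ ∑_{j ≠ i} (i,j) f` then gives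
both identities.
-/

open MvPolynomial

noncomputable section

/-- Pochhammer symbol `(a)_j = a(a+1)⋯(a+j−1)`. -/
def poch (a : ℝ) (j : ℕ) : ℝ := (ascPochhammer ℝ j).eval a

/-- The coefficient of `s^a` in `∏ᵢ (1 − s xᵢ)^{−κ}`, namely
`∑_{|α|=a} ∏ᵢ ((κ)_{αᵢ}/αᵢ!) x^α`, obtained as the degree-`a` homogeneous
component of the suitably truncated product of binomial series. -/
def genCoeff (σ : Type) [Fintype σ] [DecidableEq σ] (κ : ℝ) (a : ℕ) : MvPolynomial σ ℝ :=
  MvPolynomial.homogeneousComponent a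
    (∏ i : σ, ∑ k ∈ Finset.range (a + 1), C (poch κ k / (Nat.factorial k : ℝ)) * X i ^ k)

/-- The polynomials `p_{mn}`, defined by the generating function
`∑ p_{mn} s^m t^n = (1−s x₁)⁻¹ (1−t x₂)⁻¹ ∏ᵢ ((1−s xᵢ)(1−t xᵢ))^{−κ}`;
here `x1`, `x2` are the distinguished first and second variables. -/
def ppoly (σ : Type) [Fintype σ] [DecidableEq σ] (x1 x2 : σ) (κ : ℝ) (m n : ℕ) :
    MvPolynomial σ ℝ :=
  (∑ a ∈ Finset.range (m + 1), X x1 ^ (m - a) * genCoeff σ κ a) *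
  (∑ b ∈ Finset.range (n + 1), X x2 ^ (n - b) * genCoeff σ κ b)

/-- `ω_{mn}` for `m ≥ n`. -/
def omegaAux (σ : Type) [Fintype σ] [DecidableEq σ] (x1 x2 : σ) (κ : ℝ) (m n : ℕ) :
    MvPolynomial σ ℝ :=
  ppoly σ x1 x2 κ m n +
  ∑ j ∈ Finset.Icc 1 n,
    (poch (-κ) j * poch ((m : ℝ) - n + 1) (j - 1) /
        (poch (κ + (m : ℝ) - n + 1) j * (Nat.factorial j : ℝ))) •
      (((m : ℝ) - n + j) • ppoly σ x1 x2 κ (m + j) (n - j) +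
        (j : ℝ) • ppoly σ x1 x2 κ (n - j) (m + j))

/-- `ω_{mn}` for all `m, n`: for `m ≥ n` by the explicit formula, and
`ω_{nm} = (1,2) ω_{mn}`. -/
def omegaP (σ : Type) [Fintype σ] [DecidableEq σ] (x1 x2 : σ) (κ : ℝ) (m n : ℕ) :
    MvPolynomial σ ℝ :=
  if n ≤ m then omegaAux σ x1 x2 κ m n
  else rename (Equiv.swap x1 x2) (omegaAux σ x1 x2 κ n m)

/-- The Dunkl operator `D_i f = ∂f/∂xᵢ + κ ∑_{j≠i} (f − (i,j)f)/(xᵢ−xⱼ)`, with values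
in the fraction field of the polynomial ring (the result is actually a polynomial since
`f − (i,j)f` is divisible by `xᵢ − xⱼ`). -/
def dunkl (σ : Type) [Fintype σ] [DecidableEq σ] (κ : ℝ) (i : σ) (f : MvPolynomial σ ℝ) :
    FractionRing (MvPolynomial σ ℝ) :=
  algebraMap (MvPolynomial σ ℝ) (FractionRing (MvPolynomial σ ℝ)) (pderiv i f) +
  algebraMap (MvPolynomial σ ℝ) (FractionRing (MvPolynomial σ ℝ)) (C κ) *
    ∑ j ∈ Finset.univ.erase i,
      algebraMap (MvPolynomial σ ℝ) (FractionRing (MvPolynomial σ ℝ))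
          (f - rename (Equiv.swap i j) f) /
        algebraMap (MvPolynomial σ ℝ) (FractionRing (MvPolynomial σ ℝ)) (X i - X j)

/-- The polynomials `q_{mn}`, defined by
`∑ q_{mn} u^m v^n = ∑ p_{ij} (u+v)^i (u−v)^j`; explicitly
`q_{mn} = ∑_{i+j=m+n} p_{ij} · (coeff of u^m v^n in (u+v)^i (u−v)^j)`. -/
def qpoly (σ : Type) [Fintype σ] [DecidableEq σ] (x1 x2 : σ) (κ : ℝ) (m n : ℕ) :
    MvPolynomial σ ℝ :=
  ∑ i ∈ Finset.range (m + n + 1),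
    (∑ a ∈ Finset.range (m + 1),
        (i.choose a : ℝ) * ((m + n - i).choose (m - a) : ℝ) *
          (-1 : ℝ) ^ ((m + n - i) - (m - a))) •
      ppoly σ x1 x2 κ i (m + n - i)

/-- The symmetric Krawtchouk polynomial `K_m(t;n)` with parameters `(n, 1/2)`. -/
def kraw (n m : ℕ) (t : ℝ) : ℝ :=
  ((n.choose m : ℝ))⁻¹ *
    ∑ j ∈ Finset.range (m + 1),
      (-1 : ℝ) ^ (m - j) * poch (t - n) (m - j) * poch (-t) j /
        ((Nat.factorial (m - j) : ℝ) * (Nat.factorial j : ℝ))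

/-- The two-variable polynomials `f_{mn}` (for `m ≥ n`). -/
def fmn (κ : ℝ) (m n : ℕ) : MvPolynomial (Fin 2) ℝ :=
  (X 0 * X 1) ^ n *
    ∑ j ∈ Finset.range (m - n + 1),
      C (poch (κ + 1) (m - n - j) * poch κ j /
          ((Nat.factorial (m - n - j) : ℝ) * (Nat.factorial j : ℝ))) *
        X 0 ^ (m - n - j) * X 1 ^ j

/-- The alternating polynomial `a_N = ∏_{i<j} (xᵢ − xⱼ)`. -/
def altPoly (N : ℕ) : MvPolynomial (Fin N) ℝ :=
  ∏ p ∈ Finset.univ.filter (fun p : Fin N × Fin N => p.1 < p.2), (X p.1 - X p.2)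

/-- `A_n(u;κ)`: the coefficient of `v^n` in `(1−(u+v))^{−κ} (1−(u−v))^{−κ}`,
as a formal power series in `u`. -/
def Aser (κ : ℝ) (n : ℕ) : PowerSeries ℝ :=
  PowerSeries.mk fun m =>
    ∑ k ∈ Finset.range (m + n + 1),
      (poch κ k / (Nat.factorial k : ℝ)) *
        (poch κ (m + n - k) / (Nat.factorial (m + n - k) : ℝ)) *
        ∑ a ∈ Finset.range (m + 1),
          (k.choose a : ℝ) * ((m + n - k).choose (m - a) : ℝ) *
            (-1 : ℝ) ^ ((m + n - k) - (m - a))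

/-- `B_n(u;κ)`: the coefficient of `v^n` in `(1−(u+v))^{−κ−1} (1−(u−v))^{−κ}`,
as a formal power series in `u`. -/
def Bser (κ : ℝ) (n : ℕ) : PowerSeries ℝ :=
  PowerSeries.mk fun m =>
    ∑ k ∈ Finset.range (m + n + 1),
      (poch (κ + 1) k / (Nat.factorial k : ℝ)) *
        (poch κ (m + n - k) / (Nat.factorial (m + n - k) : ℝ)) *
        ∑ a ∈ Finset.range (m + 1),
          (k.choose a : ℝ) * ((m + n - k).choose (m - a) : ℝ) *
            (-1 : ℝ) ^ ((m + n - k) - (m - a))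

/-- The coefficient of `t ^ k` in `(1 - t) ^ (-κ)`. -/
def negBinomCoeff (κ : ℝ) (k : ℕ) : ℝ := poch κ k / (k.factorial : ℝ)

lemma negBinomCoeff_succ_mul (κ : ℝ) (k : ℕ) :
    negBinomCoeff κ (k + 1) * (k + 1) = (κ + k) * negBinomCoeff κ k := by
  have hk : (k.factorial : ℝ) ≠ 0 := by positivity
  simp only [negBinomCoeff, poch, ascPochhammer_succ_right, Polynomial.eval_mul,
    Polynomial.eval_add, Polynomial.eval_X, Polynomial.eval_natCast, Nat.factorial_succ,
    Nat.cast_mul, Nat.cast_succ]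
  field_simp

lemma prod_C_mul_X_pow {R σ : Type*} [CommSemiring R] [Fintype σ] [DecidableEq σ]
    (c : σ → R) (p : σ → ℕ) :
    ∏ i, C (c i) * X i ^ p i = monomial (Finsupp.equivFunOnFinite.symm p) (∏ i, c i) := by
  rw [monomial_eq, Finsupp.prod_fintype _ _ fun _ => pow_zero _, Finset.prod_mul_distrib,
    map_prod]
  simp

lemma coeff_X_mul_pderiv {R σ : Type*} [CommSemiring R] [DecidableEq σ] (i : σ)
    (f : MvPolynomial σ R) (γ : σ →₀ ℕ) : coeff γ (X i * pderiv i f) = γ i * coeff γ f := by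
  induction f using MvPolynomial.induction_on' with
  | monomial d r =>
    rw [X_mul_pderiv_monomial, coeff_smul, coeff_monomial]
    split_ifs with h <;> simp [h]
  | add p q hp hq => simp only [map_add, mul_add, coeff_add, hp, hq]

section GenCoeff

variable {σ : Type} [Fintype σ] [DecidableEq σ] (κ : ℝ)

lemma coeff_genCoeff (a : ℕ) (γ : σ →₀ ℕ) :
    coeff γ (genCoeff σ κ a) =
      if γ.degree = a then ∏ i, negBinomCoeff κ (γ i) else 0 := by
  rw [genCoeff, coeff_homogeneousComponent]
  split_ifs with h
  · rw [Finset.prod_univ_sum, coeff_sum, Finset.sum_eq_single_of_mem (⇑γ)]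
    · rw [prod_C_mul_X_pow, Finsupp.equivFunOnFinite_symm_coe, coeff_monomial, if_pos rfl]
      rfl
    · simp only [Fintype.mem_piFinset, Finset.mem_range, Nat.lt_succ_iff]
      exact fun i => h ▸ Finsupp.le_degree i γ
    · intro p _ hp
      rw [prod_C_mul_X_pow, coeff_monomial, if_neg]
      rintro rfl
      exact hp rfl
  · rfl

lemma genCoeff_zero : genCoeff σ κ 0 = 1 := by
  simp [genCoeff, poch]

lemma rename_genCoeff (e : Equiv.Perm σ) (a : ℕ) :
    rename e (genCoeff σ κ a) = genCoeff σ κ a := by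
  rw [genCoeff, rename_homogeneousComponent, map_prod]
  congr 1
  refine Fintype.prod_equiv e _ _ fun i => ?_
  simp [map_sum]

lemma pderiv_genCoeff_succ_eq_X_mul_pderiv_add (i : σ) (a : ℕ) :
    pderiv i (genCoeff σ κ (a + 1)) =
      X i * pderiv i (genCoeff σ κ a) + κ • genCoeff σ κ a := by
  ext γ
  rw [coeff_pderiv, coeff_add, coeff_X_mul_pderiv, coeff_smul, smul_eq_mul,
    coeff_genCoeff, coeff_genCoeff, map_add, Finsupp.degree_single]
  have hprod : (∏ j, negBinomCoeff κ ((γ + Finsupp.single i 1 : σ →₀ ℕ) j)) * (γ i + 1) =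
      (κ + γ i) * ∏ j, negBinomCoeff κ (γ j) := by
    rw [← Finset.mul_prod_erase _ _ (Finset.mem_univ i),
      ← Finset.mul_prod_erase _ (fun j => negBinomCoeff κ (γ j)) (Finset.mem_univ i),
      Finset.prod_congr rfl fun j hj => by rw [Finsupp.add_apply,
        Finsupp.single_eq_of_ne (Finset.ne_of_mem_erase hj), add_zero]]
    simp only [Finsupp.add_apply, Finsupp.single_eq_same]
    linear_combination (∏ j ∈ Finset.univ.erase i, negBinomCoeff κ (γ j)) *
      negBinomCoeff_succ_mul κ (γ i)
  by_cases hd : γ.degree = a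
  · simp only [hd, if_true, hprod]
    ring
  · simp [hd]

end GenCoeff

section PFactor

variable {σ : Type} [Fintype σ] [DecidableEq σ] (κ : ℝ)

/-- The coefficient of `s ^ m` in `(1 - s y)⁻¹ ∏ᵢ (1 - s xᵢ) ^ (-κ)`. -/
def pFactor (y : σ) (m : ℕ) : MvPolynomial σ ℝ :=
  ∑ a ∈ Finset.range (m + 1), X y ^ (m - a) * genCoeff σ κ a

lemma ppoly_eq_mul (x1 x2 : σ) (m n : ℕ) :
    ppoly σ x1 x2 κ m n = pFactor κ x1 m * pFactor κ x2 n := rfl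

lemma rename_pFactor (e : Equiv.Perm σ) (y : σ) (m : ℕ) :
    rename e (pFactor κ y m) = pFactor κ (e y) m := by
  simp only [pFactor, map_sum, map_mul, map_pow, rename_X, rename_genCoeff]

lemma pFactor_zero (y : σ) : pFactor κ y 0 = 1 := by
  simp [pFactor, genCoeff_zero]

lemma pFactor_succ (y : σ) (m : ℕ) :
    pFactor κ y (m + 1) = X y * pFactor κ y m + genCoeff σ κ (m + 1) := by
  rw [pFactor, Finset.sum_range_succ, Nat.sub_self, pow_zero, one_mul, pFactor, Finset.mul_sum]
  congr 1
  refine Finset.sum_congr rfl fun a ha => ?_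
  rw [Nat.sub_add_comm (Finset.mem_range_succ_iff.mp ha), pow_succ']
  ring

lemma pderiv_genCoeff_succ (i : σ) (a : ℕ) :
    pderiv i (genCoeff σ κ (a + 1)) = κ • pFactor κ i a := by
  induction a with
  | zero => simp [pderiv_genCoeff_succ_eq_X_mul_pderiv_add, genCoeff_zero, pFactor_zero]
  | succ a ih =>
    rw [pderiv_genCoeff_succ_eq_X_mul_pderiv_add, ih, pFactor_succ, smul_add, mul_smul_comm]

lemma X_sub_X_mul_pderiv_pFactor {i y : σ} (h : i ≠ y) (m : ℕ) :
    (X i - X y) * pderiv i (pFactor κ y m) = C κ * (pFactor κ i m - pFactor κ y m) := by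
  induction m with
  | zero => simp [pFactor_zero]
  | succ m ih =>
    rw [pFactor_succ, pFactor_succ, map_add, pderiv_mul, pderiv_X_of_ne h.symm,
      pderiv_genCoeff_succ, smul_eq_C_mul]
    linear_combination (X y : MvPolynomial σ ℝ) * ih

end PFactor

section Dunkl

variable {σ : Type} (κ : ℝ)

local notation "φ" => algebraMap (MvPolynomial σ ℝ) (FractionRing (MvPolynomial σ ℝ))

lemma algebraMap_X_sub_X_ne_zero {i j : σ} (h : i ≠ j) : φ (X i - X j) ≠ 0 :=
  (map_ne_zero_iff _ (IsFractionRing.injective _ _)).mpr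
    (sub_ne_zero.mpr ((X_injective (R := ℝ)).ne h))

lemma C_mul_div_X_sub_X {i j : σ} (h : i ≠ j) {f d : MvPolynomial σ ℝ}
    (hd : (X i - X j) * d = C κ * f) : φ (C κ) * (φ f / φ (X i - X j)) = φ d := by
  rw [← mul_div_assoc, ← map_mul, ← hd, map_mul,
    mul_div_cancel_left₀ _ (algebraMap_X_sub_X_ne_zero h)]

variable [Fintype σ] [DecidableEq σ]

lemma dunkl_zero (i : σ) : dunkl σ κ i 0 = 0 := by
  simp [dunkl]

lemma dunkl_add (i : σ) (f g : MvPolynomial σ ℝ) :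
    dunkl σ κ i (f + g) = dunkl σ κ i f + dunkl σ κ i g := by
  simp only [dunkl, map_add, add_sub_add_comm, add_div, Finset.sum_add_distrib]
  ring

lemma dunkl_smul (i : σ) (c : ℝ) (f : MvPolynomial σ ℝ) :
    dunkl σ κ i (c • f) = φ (C c) * dunkl σ κ i f := by
  have hdiff : ∀ j, c • f - rename (Equiv.swap i j) (c • f) =
      C c * (f - rename (Equiv.swap i j) f) := by
    intro j
    rw [map_smul, smul_eq_C_mul, smul_eq_C_mul, mul_sub]
  rw [dunkl, dunkl, Finset.sum_congr rfl fun j _ => by rw [hdiff j], Derivation.map_smul]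
  simp only [smul_eq_C_mul, map_mul, mul_div_assoc, ← Finset.mul_sum]
  ring

lemma dunkl_X_mul (i : σ) (f : MvPolynomial σ ℝ) :
    dunkl σ κ i (X i * f) = φ f + φ (X i) * dunkl σ κ i f +
      φ (C κ * ∑ j ∈ Finset.univ.erase i, rename (Equiv.swap i j) f) := by
  have hterm : ∀ j ∈ Finset.univ.erase i,
      φ (X i * f - rename (Equiv.swap i j) (X i * f)) / φ (X i - X j) =
        φ (X i) * (φ (f - rename (Equiv.swap i j) f) / φ (X i - X j)) +
          φ (rename (Equiv.swap i j) f) := by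
    intro j hj
    have hne := algebraMap_X_sub_X_ne_zero (Finset.ne_of_mem_erase hj).symm
    rw [map_mul, rename_X, Equiv.swap_apply_left, div_eq_iff hne, add_mul, mul_assoc,
      div_mul_cancel₀ _ hne]
    simp only [map_sub, map_mul]
    ring
  rw [dunkl, dunkl, Finset.sum_congr rfl hterm, Finset.sum_add_distrib, ← Finset.mul_sum,
    pderiv_mul, pderiv_X_self, map_mul, map_sum]
  simp only [map_add, map_mul, map_one]
  ring

lemma dunkl_ppoly_eq_zero {x1 x2 i : σ} (h12 : x1 ≠ x2) (hi1 : i ≠ x1) (hi2 : i ≠ x2)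
    (m n : ℕ) : dunkl σ κ i (ppoly σ x1 x2 κ m n) = 0 := by
  set P := pFactor κ x1 m
  set Q := pFactor κ x2 n
  have hswap1 : rename (Equiv.swap i x1) (ppoly σ x1 x2 κ m n) = pFactor κ i m * Q := by
    rw [ppoly_eq_mul, map_mul, rename_pFactor, rename_pFactor, Equiv.swap_apply_right,
      Equiv.swap_apply_of_ne_of_ne hi2.symm h12.symm]
  have hswap2 : rename (Equiv.swap i x2) (ppoly σ x1 x2 κ m n) = P * pFactor κ i n := by
    rw [ppoly_eq_mul, map_mul, rename_pFactor, rename_pFactor, Equiv.swap_apply_right,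
      Equiv.swap_apply_of_ne_of_ne hi1.symm h12]
  have hsub : ({x1, x2} : Finset σ) ⊆ Finset.univ.erase i := by
    simp [Finset.insert_subset_iff, hi1.symm, hi2.symm]
  have hfix : ∀ j ∈ Finset.univ.erase i, j ∉ ({x1, x2} : Finset σ) →
      φ (ppoly σ x1 x2 κ m n - rename (Equiv.swap i j) (ppoly σ x1 x2 κ m n)) /
        φ (X i - X j) = 0 := by
    intro j _ hj
    simp only [Finset.mem_insert, Finset.mem_singleton, not_or] at hj
    rw [ppoly_eq_mul, map_mul, rename_pFactor, rename_pFactor,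
      Equiv.swap_apply_of_ne_of_ne hi1.symm (Ne.symm hj.1),
      Equiv.swap_apply_of_ne_of_ne hi2.symm (Ne.symm hj.2), sub_self, map_zero, zero_div]
  have h1 : (X i - X x1) * (-(pderiv i P * Q)) = C κ * (P * Q - pFactor κ i m * Q) := by
    linear_combination (-Q) * X_sub_X_mul_pderiv_pFactor κ hi1 m
  have h2 : (X i - X x2) * (-(P * pderiv i Q)) = C κ * (P * Q - P * pFactor κ i n) := by
    linear_combination (-P) * X_sub_X_mul_pderiv_pFactor κ hi2 n
  rw [dunkl, ← Finset.sum_subset hsub hfix, Finset.sum_pair h12, hswap1, hswap2, mul_add,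
    ppoly_eq_mul, C_mul_div_X_sub_X κ hi1 h1, C_mul_div_X_sub_X κ hi2 h2, pderiv_mul,
    map_add]
  simp only [map_mul, map_neg]
  ring

end Dunkl

section PpolySpan

variable {σ : Type} [Fintype σ] [DecidableEq σ] (κ : ℝ) {x1 x2 : σ}

local notation "φ" => algebraMap (MvPolynomial σ ℝ) (FractionRing (MvPolynomial σ ℝ))

variable (x1 x2) in
def ppolySpan : Submodule ℝ (MvPolynomial σ ℝ) :=
  Submodule.span ℝ (Set.range fun mn : ℕ × ℕ => ppoly σ x1 x2 κ mn.1 mn.2)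

lemma ppoly_mem_ppolySpan (m n : ℕ) : ppoly σ x1 x2 κ m n ∈ ppolySpan κ x1 x2 :=
  Submodule.subset_span ⟨(m, n), rfl⟩

lemma rename_swap_mem_ppolySpan {f : MvPolynomial σ ℝ} (hf : f ∈ ppolySpan κ x1 x2) :
    rename (Equiv.swap x1 x2) f ∈ ppolySpan κ x1 x2 := by
  induction hf using Submodule.span_induction with
  | mem g hg =>
    obtain ⟨⟨m, n⟩, rfl⟩ := hg
    dsimp only
    rw [ppoly_eq_mul, map_mul, rename_pFactor, rename_pFactor, Equiv.swap_apply_left,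
      Equiv.swap_apply_right, mul_comm, ← ppoly_eq_mul]
    exact ppoly_mem_ppolySpan κ n m
  | zero => simp
  | add f g _ _ hf hg => simpa using add_mem hf hg
  | smul c f _ hf => simpa using Submodule.smul_mem _ c hf

lemma omegaP_mem_ppolySpan (m n : ℕ) : omegaP σ x1 x2 κ m n ∈ ppolySpan κ x1 x2 := by
  have hAux : ∀ m n, omegaAux σ x1 x2 κ m n ∈ ppolySpan κ x1 x2 := fun m n =>
    add_mem (ppoly_mem_ppolySpan κ m n) <| Submodule.sum_mem _ fun j _ =>
      Submodule.smul_mem _ _ <| add_mem (Submodule.smul_mem _ _ (ppoly_mem_ppolySpan κ _ _))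
        (Submodule.smul_mem _ _ (ppoly_mem_ppolySpan κ _ _))
  unfold omegaP
  split_ifs
  · exact hAux m n
  · exact rename_swap_mem_ppolySpan κ (hAux n m)

lemma rename_eq_self_of_mem_ppolySpan {e : Equiv.Perm σ} (h1 : e x1 = x1) (h2 : e x2 = x2)
    {f : MvPolynomial σ ℝ} (hf : f ∈ ppolySpan κ x1 x2) : rename e f = f := by
  induction hf using Submodule.span_induction with
  | mem g hg =>
    obtain ⟨⟨m, n⟩, rfl⟩ := hg
    dsimp only
    rw [ppoly_eq_mul, map_mul, rename_pFactor, rename_pFactor, h1, h2]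
  | zero => exact map_zero _
  | add f g _ _ hf hg => rw [map_add, hf, hg]
  | smul c f _ hf => rw [map_smul, hf]

lemma dunkl_eq_zero_of_mem_ppolySpan (h12 : x1 ≠ x2) {i : σ} (hi1 : i ≠ x1) (hi2 : i ≠ x2)
    {f : MvPolynomial σ ℝ} (hf : f ∈ ppolySpan κ x1 x2) : dunkl σ κ i f = 0 := by
  induction hf using Submodule.span_induction with
  | mem g hg =>
    obtain ⟨⟨m, n⟩, rfl⟩ := hg
    exact dunkl_ppoly_eq_zero κ h12 hi1 hi2 m n
  | zero => exact dunkl_zero κ i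
  | add f g _ _ hf hg => rw [dunkl_add, hf, hg, add_zero]
  | smul c f _ hf => rw [dunkl_smul, hf, mul_zero]

lemma sum_rename_swap_of_mem_ppolySpan (h12 : x1 ≠ x2) {i : σ} (hi1 : i ≠ x1) (hi2 : i ≠ x2)
    {s : Finset σ} (hs : {x1, x2} ⊆ s) {f : MvPolynomial σ ℝ} (hf : f ∈ ppolySpan κ x1 x2) :
    ∑ j ∈ s, rename (Equiv.swap i j) f =
      rename (Equiv.swap i x1) f + rename (Equiv.swap i x2) f + ((s.card : ℝ) - 2) • f := by
  have hfix : ∀ j ∈ s \ {x1, x2}, rename (Equiv.swap i j) f = f := by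
    intro j hj
    simp only [Finset.mem_sdiff, Finset.mem_insert, Finset.mem_singleton, not_or] at hj
    exact rename_eq_self_of_mem_ppolySpan κ
      (Equiv.swap_apply_of_ne_of_ne hi1.symm (Ne.symm hj.2.1))
      (Equiv.swap_apply_of_ne_of_ne hi2.symm (Ne.symm hj.2.2)) hf
  have hcard : 2 ≤ s.card := Finset.card_pair h12 ▸ Finset.card_le_card hs
  rw [← Finset.sum_sdiff hs, Finset.sum_pair h12, Finset.sum_congr rfl hfix, Finset.sum_const,
    Finset.card_sdiff_of_subset hs, Finset.card_pair h12, ← Nat.cast_smul_eq_nsmul ℝ,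
    Nat.cast_sub hcard, Nat.cast_two]
  abel

lemma dunkl_X_mul_of_mem_ppolySpan (h12 : x1 ≠ x2) {i : σ} (hi1 : i ≠ x1) (hi2 : i ≠ x2)
    {f : MvPolynomial σ ℝ} (hf : f ∈ ppolySpan κ x1 x2) :
    dunkl σ κ i (X i * f) =
      φ (f + C κ * ∑ j ∈ Finset.univ.erase i, rename (Equiv.swap i j) f) := by
  rw [dunkl_X_mul, dunkl_eq_zero_of_mem_ppolySpan κ h12 hi1 hi2 hf, mul_zero, add_zero,
    map_add]

end PpolySpan

/-- `i : Fin N` is `0`-based: `2 ≤ (i : ℕ)` is the paper's `2 < i`, whose index is `i + 1`. -/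
theorem omega_dunkl_higher_index (N : ℕ) (hN : 3 ≤ N) (κ : ℝ)
    (m n : ℕ) :
    (∀ i : Fin N, 2 ≤ (i : ℕ) →
      dunkl (Fin N) κ i (X i * omegaP (Fin N) ⟨0, by omega⟩ ⟨1, by omega⟩ κ m n) =
        algebraMap (MvPolynomial (Fin N) ℝ) (FractionRing (MvPolynomial (Fin N) ℝ))
          ((1 + ((N : ℝ) - 3) * κ) • omegaP (Fin N) ⟨0, by omega⟩ ⟨1, by omega⟩ κ m n +
            κ • (rename (Equiv.swap (⟨0, by omega⟩ : Fin N) i)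
                (omegaP (Fin N) ⟨0, by omega⟩ ⟨1, by omega⟩ κ m n) +
              rename (Equiv.swap (⟨1, by omega⟩ : Fin N) i)
                (omegaP (Fin N) ⟨0, by omega⟩ ⟨1, by omega⟩ κ m n))) ∧
      dunkl (Fin N) κ i (X i * omegaP (Fin N) ⟨0, by omega⟩ ⟨1, by omega⟩ κ m n) -
          algebraMap (MvPolynomial (Fin N) ℝ) (FractionRing (MvPolynomial (Fin N) ℝ))
            (C κ * ∑ j ∈ Finset.Iio i,
              rename (Equiv.swap i j) (omegaP (Fin N) ⟨0, by omega⟩ ⟨1, by omega⟩ κ m n)) =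
        algebraMap (MvPolynomial (Fin N) ℝ) (FractionRing (MvPolynomial (Fin N) ℝ))
          ((((N : ℝ) - ((i : ℕ) + 1)) * κ + 1) •
            omegaP (Fin N) ⟨0, by omega⟩ ⟨1, by omega⟩ κ m n)) ∧
    ∀ i j : Fin N, 2 ≤ (i : ℕ) → i < j →
      rename (Equiv.swap i j) (omegaP (Fin N) ⟨0, by omega⟩ ⟨1, by omega⟩ κ m n) =
        omegaP (Fin N) ⟨0, by omega⟩ ⟨1, by omega⟩ κ m n := by
  set x1 : Fin N := ⟨0, by omega⟩
  set x2 : Fin N := ⟨1, by omega⟩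
  have h12 : x1 ≠ x2 := by simp [x1, x2, Fin.ext_iff]
  have hω := omegaP_mem_ppolySpan κ (x1 := x1) (x2 := x2) m n
  have hfar : ∀ i : Fin N, 2 ≤ (i : ℕ) → i ≠ x1 ∧ i ≠ x2 := fun i hi =>
    ⟨fun h => by simp [h, x1] at hi, fun h => by simp [h, x2] at hi⟩
  refine ⟨fun i hi => ?_, fun i j hi hij => ?_⟩
  · obtain ⟨hi1, hi2⟩ := hfar i hi
    have hsub_erase : ({x1, x2} : Finset (Fin N)) ⊆ Finset.univ.erase i := by
      simp [Finset.insert_subset_iff, hi1.symm, hi2.symm]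
    have hsub_Iio : ({x1, x2} : Finset (Fin N)) ⊆ Finset.Iio i := by
      simp only [Finset.insert_subset_iff, Finset.singleton_subset_iff, Finset.mem_Iio,
        Fin.lt_def, x1, x2]
      omega
    rw [dunkl_X_mul_of_mem_ppolySpan κ h12 hi1 hi2 hω,
      sum_rename_swap_of_mem_ppolySpan κ h12 hi1 hi2 hsub_erase hω,
      sum_rename_swap_of_mem_ppolySpan κ h12 hi1 hi2 hsub_Iio hω,
      Finset.card_erase_of_mem (Finset.mem_univ i), Finset.card_univ, Fintype.card_fin,
      Fin.card_Iio, Nat.cast_pred (by omega), Equiv.swap_comm x1 i, Equiv.swap_comm x2 i,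
      ← map_sub]
    constructor <;> congr 1 <;>
      simp only [smul_eq_C_mul, C_add, C_sub, C_mul, C_1, map_ofNat] <;> ring
  · have hj : 2 ≤ (j : ℕ) := le_trans hi (Fin.lt_def.mp hij).le
    exact rename_eq_self_of_mem_ppolySpan κ
      (Equiv.swap_apply_of_ne_of_ne (hfar i hi).1.symm (hfar j hj).1.symm)
      (Equiv.swap_apply_of_ne_of_ne (hfar i hi).2.symm (hfar j hj).2.symm) hω
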